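/- If Σ admits a Mal'cev term, then F_Σ weakly preserves all pullbacks of epimorphisms: for surjections f₁ : A₁ → C and f₂ : A₂ → C with pullback (P, p₁, p₂), and any u₁ ∈ F_Σ(A₁), u₂ ∈ F_Σ(A₂) with (F_Σ f₁)(u₁) = (F_Σ f₂)(u₂), there exists w ∈ F_Σ(P) with (F_Σ p₁)(w) = u₁ and (F_Σ p₂)(w) = u₂. -/

import Mathlib

universe u

/-- A finitary algebraic signature. -/
structure Sig where
  ops : Type
  ar : ops → ℕ

namespace UA

/-- Terms over the signature `S` with variables from `X`. -/
inductive Term (S : Sig) (X : Type) : Type where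
  | var : X → Term S X
  | app : (o : S.ops) → (Fin (S.ar o) → Term S X) → Term S X

/-- Simultaneous substitution of terms for variables. -/
def Term.subst {S : Sig} {X Y : Type} (σ : X → Term S Y) : Term S X → Term S Y
  | .var x => σ x
  | .app o ts => .app o fun i => (ts i).subst σ

/-- Renaming (substitution of variables for variables). -/
def Term.rename {S : Sig} {X Y : Type} (φ : X → Y) (t : Term S X) : Term S Y :=
  t.subst fun x => .var (φ x)

/-- Equational provability from the set `Γ` of axioms (pairs of terms over the
countable variable set `ℕ`), over arbitrary variable sets. -/
inductive Eqv {S : Sig} (Γ : Set (Term S ℕ × Term S ℕ)) :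
    {X : Type} → Term S X → Term S X → Prop where
  | axm {X : Type} {l r : Term S ℕ} (h : (l, r) ∈ Γ) (σ : ℕ → Term S X) :
      Eqv Γ (l.subst σ) (r.subst σ)
  | refl {X : Type} (t : Term S X) : Eqv Γ t t
  | symm {X : Type} {t u : Term S X} : Eqv Γ t u → Eqv Γ u t
  | trans {X : Type} {t u v : Term S X} : Eqv Γ t u → Eqv Γ u v → Eqv Γ t v
  | congr {X : Type} (o : S.ops) {ts us : Fin (S.ar o) → Term S X} :
      (∀ i, Eqv Γ (ts i) (us i)) → Eqv Γ (.app o ts) (.app o us)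
  | sbst {X Y : Type} {t u : Term S X} (σ : X → Term S Y) :
      Eqv Γ t u → Eqv Γ (t.subst σ) (u.subst σ)

def termSetoid {S : Sig} (Γ : Set (Term S ℕ × Term S ℕ)) (X : Type) : Setoid (Term S X) :=
  ⟨Eqv Γ, ⟨fun t => .refl t, fun h => h.symm, fun h h' => h.trans h'⟩⟩

/-- The free algebra over the variable set `X` in the variety axiomatized by `Γ`:
terms modulo `Γ`-provable equality.  This is the object part of the free-algebra
functor `F_Σ`. -/
def FreeAlg {S : Sig} (Γ : Set (Term S ℕ × Term S ℕ)) (X : Type) : Type :=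
  Quotient (termSetoid Γ X)

/-- The action of the free-algebra functor `F_Σ` on maps: variable substitution. -/
def FreeAlg.map {S : Sig} {Γ : Set (Term S ℕ × Term S ℕ)} {X Y : Type} (φ : X → Y) :
    FreeAlg Γ X → FreeAlg Γ Y :=
  Quotient.map (Term.rename φ) fun _ _ h => h.sbst _

end UA


/-!
The relation between `F_Σ A₁` and `F_Σ A₂` formed by the two images of `F_Σ P`, for a span
`A₁ ← P → A₂`, is closed under the Mal'cev operation, hence difunctional: with `(a, b)`,
`(c, b)`, `(c, d)` it contains `(m(a, c, c), m(b, b, d)) ≈ (a, d)`. For the pullback of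
surjections with sections `g₁`, `g₂`, take `a = t₁`, `b = g₂ f₁ t₁`, `c = g₁ f₁ t₁ ≈ g₁ f₂ t₂`,
`d = t₂`: each of the three pairs is the image of a renaming of `t₁` or `t₂` into `P`.
-/

namespace UA

variable {S : Sig}

theorem Term.subst_subst {X Y Z : Type} (σ : X → Term S Y) (τ : Y → Term S Z)
    (t : Term S X) : (t.subst σ).subst τ = t.subst fun x => (σ x).subst τ := by
  induction t with
  | var x => rfl
  | app o ts ih => exact congrArg _ (funext ih)

theorem Term.rename_subst {X Y Z : Type} (φ : X → Y) (σ : Y → Term S Z) (t : Term S X) :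
    (t.rename φ).subst σ = t.subst (σ ∘ φ) :=
  Term.subst_subst _ _ t

theorem Term.subst_rename {X Y Z : Type} (σ : X → Term S Y) (φ : Y → Z) (t : Term S X) :
    (t.subst σ).rename φ = t.subst fun x => (σ x).rename φ :=
  Term.subst_subst _ _ t

theorem Term.rename_rename {X Y Z : Type} (φ : X → Y) (ψ : Y → Z) (t : Term S X) :
    (t.rename φ).rename ψ = t.rename (ψ ∘ φ) :=
  Term.subst_subst _ _ t

theorem Term.rename_id {X : Type} (t : Term S X) : t.rename id = t := by
  induction t with
  | var x => rfl
  | app o ts ih => exact congrArg _ (funext ih)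

namespace Eqv

variable {Γ : Set (Term S ℕ × Term S ℕ)}

theorem rename {X Y : Type} {t u : Term S X} (φ : X → Y) (h : Eqv Γ t u) :
    Eqv Γ (t.rename φ) (u.rename φ) :=
  h.sbst _

theorem subst_congr {X Y : Type} {σ τ : X → Term S Y} (h : ∀ x, Eqv Γ (σ x) (τ x))
    (t : Term S X) : Eqv Γ (t.subst σ) (t.subst τ) := by
  induction t with
  | var x => exact h x
  | app o ts ih => exact .congr o ih

end Eqv

def Term.subst₃ (m : Term S (Fin 3)) {X : Type} (a b c : Term S X) : Term S X :=
  m.subst ![a, b, c]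

theorem Term.subst₃_rename (m : Term S (Fin 3)) {X Y : Type} (φ : X → Y) (a b c : Term S X) :
    (m.subst₃ a b c).rename φ = m.subst₃ (a.rename φ) (b.rename φ) (c.rename φ) := by
  rw [Term.subst₃, Term.subst_rename]
  congr 1
  funext i
  fin_cases i <;> rfl

namespace Eqv

variable {Γ : Set (Term S ℕ × Term S ℕ)} {m : Term S (Fin 3)} {X : Type}

theorem subst₃_congr {a a' b b' c c' : Term S X} (ha : Eqv Γ a a') (hb : Eqv Γ b b')
    (hc : Eqv Γ c c') : Eqv Γ (m.subst₃ a b c) (m.subst₃ a' b' c') :=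
  subst_congr (fun i => by fin_cases i <;> assumption) m

theorem subst₃_self_right (hm₁ : Eqv Γ (m.rename ![0, 1, 1]) (Term.var 0 : Term S ℕ))
    (a b : Term S X) : Eqv Γ (m.subst₃ a b b) a := by
  let σ : ℕ → Term S X := fun n => if n = 0 then a else b
  have e : m.subst₃ a b b = (m.rename ![0, 1, 1]).subst σ := by
    rw [Term.subst₃, Term.rename_subst]
    congr 1
    funext i
    fin_cases i <;> rfl
  rw [e]
  exact hm₁.sbst σ

theorem subst₃_self_left (hm₂ : Eqv Γ (m.rename ![0, 0, 1]) (Term.var 1 : Term S ℕ))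
    (a b : Term S X) : Eqv Γ (m.subst₃ a a b) b := by
  let σ : ℕ → Term S X := fun n => if n = 0 then a else b
  have e : m.subst₃ a a b = (m.rename ![0, 0, 1]).subst σ := by
    rw [Term.subst₃, Term.rename_subst]
    congr 1
    funext i
    fin_cases i <;> rfl
  rw [e]
  exact hm₂.sbst σ

end Eqv

def SpanRel (Γ : Set (Term S ℕ × Term S ℕ)) {P A₁ A₂ : Type} (p : P → A₁) (q : P → A₂)
    (t₁ : Term S A₁) (t₂ : Term S A₂) : Prop :=
  ∃ w : Term S P, Eqv Γ (w.rename p) t₁ ∧ Eqv Γ (w.rename q) t₂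

namespace SpanRel

variable {Γ : Set (Term S ℕ × Term S ℕ)} {P A₁ A₂ : Type} {p : P → A₁} {q : P → A₂}

theorem of_rename {X : Type} (x : X → P) (t : Term S X) :
    SpanRel Γ p q (t.rename (p ∘ x)) (t.rename (q ∘ x)) :=
  ⟨t.rename x, by rw [Term.rename_rename]; exact .refl _,
    by rw [Term.rename_rename]; exact .refl _⟩

theorem of_eqv_left {t₁ t₁' : Term S A₁} {t₂ : Term S A₂} (h : SpanRel Γ p q t₁ t₂)
    (h₁ : Eqv Γ t₁ t₁') : SpanRel Γ p q t₁' t₂ :=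
  let ⟨w, hp, hq⟩ := h
  ⟨w, hp.trans h₁, hq⟩

theorem difunctional {m : Term S (Fin 3)}
    (hm₁ : Eqv Γ (m.rename ![0, 1, 1]) (Term.var 0 : Term S ℕ))
    (hm₂ : Eqv Γ (m.rename ![0, 0, 1]) (Term.var 1 : Term S ℕ))
    {a c : Term S A₁} {b d : Term S A₂} (hab : SpanRel Γ p q a b) (hcb : SpanRel Γ p q c b)
    (hcd : SpanRel Γ p q c d) : SpanRel Γ p q a d := by
  obtain ⟨w₁, hw₁p, hw₁q⟩ := hab
  obtain ⟨w₂, hw₂p, hw₂q⟩ := hcb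
  obtain ⟨w₃, hw₃p, hw₃q⟩ := hcd
  refine ⟨m.subst₃ w₁ w₂ w₃, ?_, ?_⟩
  · rw [Term.subst₃_rename]
    exact (Eqv.subst₃_congr hw₁p hw₂p hw₃p).trans (Eqv.subst₃_self_right hm₁ a c)
  · rw [Term.subst₃_rename]
    exact (Eqv.subst₃_congr hw₁q hw₂q hw₃q).trans (Eqv.subst₃_self_left hm₂ b d)

end SpanRel

theorem spanRel_pullback_of_surjective {Γ : Set (Term S ℕ × Term S ℕ)} {m : Term S (Fin 3)}
    (hm₁ : Eqv Γ (m.rename ![0, 1, 1]) (Term.var 0 : Term S ℕ))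
    (hm₂ : Eqv Γ (m.rename ![0, 0, 1]) (Term.var 1 : Term S ℕ))
    {A₁ A₂ C : Type} {f₁ : A₁ → C} {f₂ : A₂ → C}
    (hf₁ : Function.Surjective f₁) (hf₂ : Function.Surjective f₂)
    {t₁ : Term S A₁} {t₂ : Term S A₂} (h : Eqv Γ (t₁.rename f₁) (t₂.rename f₂)) :
    SpanRel Γ (fun k : {a : A₁ × A₂ // f₁ a.1 = f₂ a.2} => k.1.1) (fun k => k.1.2) t₁ t₂ := by
  obtain ⟨g₁, hg₁⟩ := hf₁.hasRightInverse
  obtain ⟨g₂, hg₂⟩ := hf₂.hasRightInverse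
  let π₁ : {a : A₁ × A₂ // f₁ a.1 = f₂ a.2} → A₁ := fun k => k.1.1
  let π₂ : {a : A₁ × A₂ // f₁ a.1 = f₂ a.2} → A₂ := fun k => k.1.2
  have hab : SpanRel Γ π₁ π₂ (t₁.rename id) (t₁.rename (g₂ ∘ f₁)) :=
    SpanRel.of_rename (p := π₁) (q := π₂) (fun a => ⟨(a, g₂ (f₁ a)), (hg₂ _).symm⟩) t₁
  rw [Term.rename_id] at hab
  have hcb : SpanRel Γ π₁ π₂ (t₁.rename (g₁ ∘ f₁)) (t₁.rename (g₂ ∘ f₁)) :=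
    SpanRel.of_rename (p := π₁) (q := π₂) (fun a => ⟨(g₁ (f₁ a), g₂ (f₁ a)), by rw [hg₁, hg₂]⟩) t₁
  have hcd : SpanRel Γ π₁ π₂ (t₂.rename (g₁ ∘ f₂)) (t₂.rename id) :=
    SpanRel.of_rename (p := π₁) (q := π₂) (fun a => ⟨(g₁ (f₂ a), a), hg₁ _⟩) t₂
  rw [Term.rename_id] at hcd
  have hc : Eqv Γ (t₂.rename (g₁ ∘ f₂)) (t₁.rename (g₁ ∘ f₁)) := by
    simpa only [Term.rename_rename] using (h.rename g₁).symm
  exact hab.difunctional hm₁ hm₂ hcb (hcd.of_eqv_left hc)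

/-- If the variety of `Γ` has a Mal'cev term, then the free-algebra functor `F_Σ`
weakly preserves all pullbacks of epis: for surjections `f₁ : A₁ → C`, `f₂ : A₂ → C`
with pullback `P` and `u₁ ∈ F_Σ A₁`, `u₂ ∈ F_Σ A₂` with `(F_Σ f₁) u₁ = (F_Σ f₂) u₂`,
there is `w ∈ F_Σ P` projecting to `u₁` and `u₂`. -/
theorem malcev_implies_weakly_preserves_epi_pullbacks
    (Γ : Set (Term S ℕ × Term S ℕ)) (m : Term S (Fin 3))
    (hm₁ : Eqv Γ (m.rename ![0, 1, 1]) (Term.var 0 : Term S ℕ))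
    (hm₂ : Eqv Γ (m.rename ![0, 0, 1]) (Term.var 1 : Term S ℕ))
    {A₁ A₂ C : Type} (f₁ : A₁ → C) (f₂ : A₂ → C)
    (hf₁ : Function.Surjective f₁) (hf₂ : Function.Surjective f₂)
    (u₁ : FreeAlg Γ A₁) (u₂ : FreeAlg Γ A₂)
    (h : FreeAlg.map f₁ u₁ = FreeAlg.map f₂ u₂) :
    ∃ w : FreeAlg Γ {a : A₁ × A₂ // f₁ a.1 = f₂ a.2},
      FreeAlg.map (fun k => k.1.1) w = u₁ ∧ FreeAlg.map (fun k => k.1.2) w = u₂ := by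
  obtain ⟨t₁, rfl⟩ := Quotient.exists_rep u₁
  obtain ⟨t₂, rfl⟩ := Quotient.exists_rep u₂
  obtain ⟨w, hw₁, hw₂⟩ :=
    spanRel_pullback_of_surjective hm₁ hm₂ hf₁ hf₂ (Quotient.exact h)
  exact ⟨⟦w⟧, Quotient.sound hw₁, Quotient.sound hw₂⟩

end UA
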